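/- arXiv:2410.23459 — 7 statements merged into one kernel-verified Lean document; each statement's English description precedes it below -/
import Mathlib

section
/- Let (X,d) be a nonempty finite metric space and let f : X → X satisfy d(f x, f y) < d(x, y) for all x, y ∈ X with x ≠ y. Then f has a unique fixed point x', and there exists n ∈ ℕ such that the n-fold iterate f^[n] sends every point of X to x' (i.e., f^[n](X) = {x'}). -/
/-! A minimiser of `x ↦ dist x (f x)` is a fixed point `a`. The distance to `a` strictly decreases
along every orbit until it hits `a`, so on a finite space every orbit reaches `a`, and finiteness
again makes the number of steps uniform. -/

open Function

theorem exists_isFixedPt_of_dist_lt {X : Type*} [Dist X] [Finite X] [Nonempty X] {f : X → X}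
    (h : ∀ x y : X, x ≠ y → dist (f x) (f y) < dist x y) : ∃ a, IsFixedPt f a := by
  obtain ⟨a, ha⟩ := Finite.exists_min fun x => dist x (f x)
  refine ⟨a, by_contra fun hne => ?_⟩
  exact (ha (f a)).not_gt (h a (f a) (Ne.symm hne))

theorem exists_iterate_eq_of_lt_of_ne {X β : Type*} [Finite X] [Preorder β] {f : X → X}
    (φ : X → β) {a : X} (h : ∀ x, x ≠ a → φ (f x) < φ x) (x : X) : ∃ n, f^[n] x = a := by
  by_contra! hne
  -- otherwise `φ` strictly decreases along the orbit, which is then injective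
  have hanti : StrictAnti fun n => φ (f^[n] x) :=
    strictAnti_nat_of_succ_lt fun n => by
      rw [iterate_succ_apply']
      exact h _ (hne n)
  exact not_injective_infinite_finite (fun n => f^[n] x) hanti.injective.of_comp

theorem exists_iterate_eq_const_of_forall_exists_iterate_eq {X : Type*} [Finite X] {f : X → X}
    {a : X} (ha : IsFixedPt f a) (h : ∀ x, ∃ n, f^[n] x = a) : ∃ N, ∀ x, f^[N] x = a := by
  choose n hn using h
  obtain ⟨N, hN⟩ := Finite.exists_le n
  refine ⟨N, fun x => ?_⟩
  rw [← Nat.sub_add_cancel (hN x), iterate_add_apply, hn x, (ha.iterate _).eq]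

/-- If `f` strictly decreases distances on a nonempty finite metric space, then `f`
has a unique fixed point `x'`, and some iterate `f^[n]` sends every point to `x'`. -/
theorem stmt0 {X : Type*} [MetricSpace X] [Fintype X] [Nonempty X]
    (f : X → X) (h : ∀ x y : X, x ≠ y → dist (f x) (f y) < dist x y) :
    ∃! x' : X, f x' = x' ∧ ∃ n : ℕ, ∀ x : X, f^[n] x = x' := by
  obtain ⟨a, ha⟩ := exists_isFixedPt_of_dist_lt h
  have hreach : ∀ x, ∃ n, f^[n] x = a :=
    exists_iterate_eq_of_lt_of_ne (dist · a) fun x hx => by simpa only [ha.eq] using h x a hx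
  obtain ⟨N, hN⟩ := exists_iterate_eq_const_of_forall_exists_iterate_eq ha hreach
  refine ⟨a, ⟨ha, N, hN⟩, fun b ⟨_, n, hn⟩ => ?_⟩
  rw [← hn a, (ha.iterate n).eq]
end

section
/- Let X = {2^n : n ∈ ℕ} ⊆ ℝ (so 1 = 2^0 ∈ X) with the standard metric d(x,y) = |x − y|, and define f : X → X by f(1) = 1 and f(x) = x/2 for x ∈ X with x > 1. Then (i) |f(x) − f(y)| ≤ (1/2)|x − y| for all x, y ∈ X, so f is a contraction with fixed point 1; and (ii) f maps X onto X, so for every n ∈ ℕ the image of X under the n-fold iterate f^[n] equals X and in particular is never a singleton. -/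
/-- `X = {2^n : n ∈ ℕ} ⊆ ℝ`. -/
def Xpow : Set ℝ := {x : ℝ | ∃ n : ℕ, x = 2 ^ n}

/-- `f : X → X` with `f 1 = 1` and `f x = x / 2` for `x ≠ 1`. -/
noncomputable def fpow : Xpow → Xpow := fun x =>
  if hx : (x : ℝ) = 1 then x
  else ⟨(x : ℝ) / 2, by
    obtain ⟨n, hn⟩ := x.2
    cases n with
    | zero => exact absurd (by rw [hn]; norm_num) hx
    | succ m => exact ⟨m, by rw [hn, pow_succ]; ring⟩⟩


lemma Xpow_ge_two {x : ℝ} (hx : x ∈ Xpow) (h1 : x ≠ 1) : 2 ≤ x := by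
  obtain ⟨n, rfl⟩ := hx
  cases n with
  | zero => simp at h1
  | succ m =>
    calc (2:ℝ) = 2 ^ 1 := by norm_num
    _ ≤ 2 ^ (m + 1) := by
        apply pow_le_pow_right₀ (by norm_num) (by omega)

lemma fpow_val (x : Xpow) : (fpow x : ℝ) = if (x : ℝ) = 1 then 1 else (x : ℝ) / 2 := by
  unfold fpow
  split_ifs with h
  · simp [h]
  · rfl

/-- `fpow` is a `(1/2)`-contraction fixing `1`, it is surjective, and every
iterate has image all of `X`; in particular no iterate has singleton image. -/
theorem stmt2 :
    (∀ x y : Xpow, |(fpow x : ℝ) - (fpow y : ℝ)| ≤ (1 / 2) * |(x : ℝ) - (y : ℝ)|) ∧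
    fpow ⟨1, 0, by norm_num⟩ = ⟨1, 0, by norm_num⟩ ∧
    Function.Surjective fpow ∧
    (∀ n : ℕ, Set.range (fpow^[n]) = Set.univ) ∧
    (∀ n : ℕ, ¬ ∃ c : Xpow, Set.range (fpow^[n]) = {c}) := by
  have hsurj : Function.Surjective fpow := by
    rintro ⟨y, n, rfl⟩
    refine ⟨⟨2 ^ (n + 1), n + 1, rfl⟩, ?_⟩
    apply Subtype.ext
    rw [fpow_val]
    have h2 : ((2:ℝ) ^ (n + 1)) ≠ 1 := by
      have : (1:ℝ) < 2 ^ (n + 1) := one_lt_pow₀ (by norm_num) (by omega)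
      exact this.ne'
    simp only [h2, if_false]
    rw [pow_succ]; ring
  have hrange : ∀ n : ℕ, Set.range (fpow^[n]) = Set.univ := fun n =>
    Set.range_eq_univ.mpr (hsurj.iterate n)
  refine ⟨?_, ?_, hsurj, hrange, ?_⟩
  · intro x y
    rw [fpow_val, fpow_val]
    by_cases hx : (x : ℝ) = 1 <;> by_cases hy : (y : ℝ) = 1 <;>
      simp only [hx, hy, if_true, if_false]
    · simp
    · have h2 : (2:ℝ) ≤ y := Xpow_ge_two y.2 hy
      rw [abs_of_nonpos (by linarith), abs_of_nonpos (by linarith)]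
      linarith
    · have h2 : (2:ℝ) ≤ x := Xpow_ge_two x.2 hx
      rw [abs_of_nonneg (by linarith), abs_of_nonneg (by linarith)]
      linarith
    · have : (x:ℝ) / 2 - (y:ℝ) / 2 = ((x:ℝ) - y) / 2 := by ring
      rw [this, abs_div]
      rw [abs_of_nonneg (by norm_num : (0:ℝ) ≤ 2)]
      linarith [abs_nonneg ((x:ℝ) - y)]
  · apply Subtype.ext
    rw [fpow_val]
    simp
  · rintro n ⟨c, hc⟩
    rw [hrange n] at hc
    have h1 : (⟨1, 0, by norm_num⟩ : Xpow) = c := by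
      rw [← Set.mem_singleton_iff, ← hc]; trivial
    have h2 : (⟨2, 1, by norm_num⟩ : Xpow) = c := by
      rw [← Set.mem_singleton_iff, ← hc]; trivial
    have h3 : (⟨1, 0, by norm_num⟩ : Xpow) = ⟨2, 1, by norm_num⟩ := h1.trans h2.symm
    have : (1:ℝ) = 2 := congrArg Subtype.val h3
    norm_num at this
end

section
/- Let X ⊆ ℤ², let d be the Euclidean metric, and let f : X → X satisfy d(f x, f y) ≤ γ d(x,y) for all x, y ∈ X, for some γ ∈ [0,1). Suppose x' ∈ X is a fixed point of f and that for every x ∈ X, f(x) = x' or f(x) is c₂-adjacent to x'. Then f(f(f(x))) = x' for every x ∈ X. -/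
/-- Euclidean distance on `ℤⁿ`. -/
noncomputable def eDist {n : ℕ} (x y : Fin n → ℤ) : ℝ :=
  Real.sqrt (∑ i, ((x i - y i : ℤ) : ℝ) ^ 2)

/-- `c_u`-adjacency on `ℤⁿ`: distinct points differing by at most 1 in each
coordinate, with at most `u` coordinates differing. -/
def cAdj {n : ℕ} (u : ℕ) (x y : Fin n → ℤ) : Prop :=
  x ≠ y ∧
  (Finset.univ.filter fun i => |x i - y i| = 1).card ≤ u ∧
  ∀ j, |x j - y j| ≠ 1 → x j = y j

lemma cadj_dist {y z : Fin 2 → ℤ} (h : cAdj 2 y z) :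
    eDist y z = 1 ∨ eDist y z = Real.sqrt 2 := by
  obtain ⟨hne, -, hcoord⟩ := h
  have h0 : (y 0 - z 0) ^ 2 = 0 ∨ (y 0 - z 0) ^ 2 = 1 := by
    by_cases h : |y 0 - z 0| = 1
    · right; rw [← sq_abs, h]; ring
    · left; have := hcoord 0 h; rw [this]; ring
  have h1 : (y 1 - z 1) ^ 2 = 0 ∨ (y 1 - z 1) ^ 2 = 1 := by
    by_cases h : |y 1 - z 1| = 1
    · right; rw [← sq_abs, h]; ring
    · left; have := hcoord 1 h; rw [this]; ring
  have hE : eDist y z =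
      Real.sqrt (((y 0 - z 0) ^ 2 + (y 1 - z 1) ^ 2 : ℤ) : ℝ) := by
    simp [eDist, Fin.sum_univ_two]
  have hne' : ¬ ((y 0 - z 0) ^ 2 = 0 ∧ (y 1 - z 1) ^ 2 = 0) := by
    rintro ⟨ha, hb⟩
    apply hne
    have ha' : y 0 = z 0 := by nlinarith
    have hb' : y 1 = z 1 := by nlinarith
    funext j
    fin_cases j <;> assumption
  rcases h0 with h0 | h0 <;> rcases h1 with h1 | h1
  · exact absurd ⟨h0, h1⟩ hne'
  · left; rw [hE, h0, h1]; norm_num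
  · left; rw [hE, h0, h1]; norm_num
  · right; rw [hE, h0, h1]; norm_num

/-- If `f : X → X` (`X ⊆ ℤ²`) is a digital contraction with fixed point `x'`, and
every value of `f` is `x'` or `c₂`-adjacent to `x'`, then `f ∘ f ∘ f` is constantly `x'`. -/
theorem stmt3 {X : Set (Fin 2 → ℤ)} (f : X → X)
    (γ : ℝ) (hγ0 : 0 ≤ γ) (hγ1 : γ < 1)
    (hf : ∀ x y : X, eDist (f x).1 (f y).1 ≤ γ * eDist x.1 y.1)
    (x' : X) (hx' : f x' = x')
    (hN : ∀ x : X, f x = x' ∨ cAdj 2 (f x).1 x'.1) :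
    ∀ x : X, f (f (f x)) = x' := by
  intro x
  have key : ∀ z : X, eDist (f z).1 x'.1 ≤ γ * eDist z.1 x'.1 := by
    intro z
    have := hf z x'
    rwa [hx'] at this
  have s2pos : (0 : ℝ) < Real.sqrt 2 := Real.sqrt_pos.mpr (by norm_num)
  have one_le_s2 : (1 : ℝ) ≤ Real.sqrt 2 := by
    rw [show (1 : ℝ) = Real.sqrt 1 by simp]
    exact Real.sqrt_le_sqrt (by norm_num)
  rcases hN x with h1 | h1
  · rw [h1, hx', hx']
  rcases hN (f x) with h2 | h2
  · rw [h2, hx']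
  rcases hN (f (f x)) with h3 | h3
  · exact h3
  exfalso
  have d1 : eDist (f x).1 x'.1 ≤ Real.sqrt 2 := by
    rcases cadj_dist h1 with h | h
    · rw [h]; exact one_le_s2
    · rw [h]
  have d2 : eDist (f (f x)).1 x'.1 < Real.sqrt 2 := by
    have := key (f x)
    nlinarith [mul_le_mul_of_nonneg_left d1 hγ0]
  have d2' : eDist (f (f x)).1 x'.1 = 1 := by
    rcases cadj_dist h2 with h | h
    · exact h
    · rw [h] at d2; exact absurd d2 (lt_irrefl _)
  have d3 : eDist (f (f (f x))).1 x'.1 < 1 := by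
    have := key (f (f x))
    rw [d2'] at this
    linarith
  have d3' : (1 : ℝ) ≤ eDist (f (f (f x))).1 x'.1 := by
    rcases cadj_dist h3 with h | h
    · rw [h]
    · rw [h]; exact one_le_s2
  linarith
end

section
/- Let X ⊆ ℤⁿ be c_u-connected and uniformly c_u-connected, i.e., every pair of c_u-adjacent points x, y ∈ X satisfies d(x,y) = √u where d is the Euclidean metric. Let f : X → X be c_u-continuous and satisfy d(f x, f y) ≤ γ d(x,y) for all x, y ∈ X, for some γ ∈ [0,1). Then f is a constant function. -/
/-- `X` is `c_u`-connected: any two points of `X` are joined by a sequence of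
points of `X` in which consecutive points are `c_u`-adjacent. -/
def cConnected {n : ℕ} (u : ℕ) (X : Set (Fin n → ℤ)) : Prop :=
  ∀ a b : X, Relation.ReflTransGen (fun p q : X => cAdj u p.1 q.1) a b

/-- `f : X → X` is `c_u`-continuous: adjacent points map to equal or adjacent points. -/
def cContinuous {n : ℕ} (u : ℕ) {X : Set (Fin n → ℤ)} (f : X → X) : Prop :=
  ∀ a b : X, cAdj u a.1 b.1 → f a = f b ∨ cAdj u (f a).1 (f b).1

/-- A `c_u`-continuous digital contraction on a uniformly `c_u`-connected digital
image is constant. -/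
theorem stmt4 {n u : ℕ} (hu1 : 1 ≤ u) (hun : u ≤ n)
    (X : Set (Fin n → ℤ)) (hconn : cConnected u X)
    (hunif : ∀ x y : X, cAdj u x.1 y.1 → eDist x.1 y.1 = Real.sqrt u)
    (f : X → X) (hcont : cContinuous u f)
    (γ : ℝ) (hγ0 : 0 ≤ γ) (hγ1 : γ < 1)
    (hf : ∀ x y : X, eDist (f x).1 (f y).1 ≤ γ * eDist x.1 y.1) :
    ∀ x y : X, f x = f y := by
  have hsu : (0:ℝ) < Real.sqrt u := by
    apply Real.sqrt_pos.2
    exact_mod_cast hu1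
  have key : ∀ a b : X, cAdj u a.1 b.1 → f a = f b := by
    intro a b hab
    rcases hcont a b hab with h | h
    · exact h
    · exfalso
      have h1 : eDist (f a).1 (f b).1 = Real.sqrt u := hunif _ _ h
      have h2 := hf a b
      rw [h1, hunif a b hab] at h2
      nlinarith
  intro x y
  induction hconn x y with
  | refl => rfl
  | tail _ hbc ih => exact ih.trans (key _ _ hbc)
end

section
/- Let (X,d) be a nonempty uniformly discrete metric space, and let J, K : X → X be such that J(X) ⊆ K(X); J and K are weakly commutative, i.e., d(J(K x), K(J x)) ≤ d(J x, K x) for all x ∈ X; and there exist ξ₁, ξ₂, ξ₃ ≥ 0 with ξ₁ + ξ₂ + ξ₃ < 1 such that d(J u, J q) ≤ ξ₁ d(K u, K q) + ξ₂ d(K u, J u) + ξ₃ d(K q, J q) for all u, q ∈ X. Then J and K have a unique common fixed point, i.e., there is a unique z ∈ X with J(z) = z and K(z) = z. -/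
/-- Weakly commutative maps `J, K` on a nonempty uniformly discrete metric space,
with `J(X) ⊆ K(X)` and satisfying the contraction-type inequality, have a unique
common fixed point. -/
theorem stmt10 {X : Type*} [MetricSpace X] [Nonempty X]
    (hud : ∃ ε > (0 : ℝ), ∀ x y : X, dist x y < ε → x = y)
    (J K : X → X) (hJK : Set.range J ⊆ Set.range K)
    (hwc : ∀ x : X, dist (J (K x)) (K (J x)) ≤ dist (J x) (K x))
    (ξ₁ ξ₂ ξ₃ : ℝ) (h1 : 0 ≤ ξ₁) (h2 : 0 ≤ ξ₂) (h3 : 0 ≤ ξ₃)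
    (hsum : ξ₁ + ξ₂ + ξ₃ < 1)
    (hc : ∀ u q : X, dist (J u) (J q) ≤
      ξ₁ * dist (K u) (K q) + ξ₂ * dist (K u) (J u) + ξ₃ * dist (K q) (J q)) :
    ∃! z : X, J z = z ∧ K z = z := by
  obtain ⟨ε, hε, hdisc⟩ := hud
  have h1' : ξ₁ < 1 := by linarith
  have h2' : ξ₂ < 1 := by linarith
  -- choose a "preimage" function f with K (f x) = J x
  have hf : ∀ x : X, ∃ y, K y = J x := fun x => hJK ⟨x, rfl⟩
  choose f hfK using hf
  -- Step 1: find a coincidence point u with K u = J u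
  have key : ∃ u : X, K u = J u := by
    obtain ⟨x₀⟩ := ‹Nonempty X›
    set x : ℕ → X := fun n => f^[n] (f x₀) with hx
    have hstep : ∀ n, K (x (n+1)) = J (x n) := by
      intro n
      simp only [hx, Function.iterate_succ_apply']
      exact hfK _
    set lam := (ξ₁ + ξ₃) / (1 - ξ₂) with hlam
    have hlam0 : 0 ≤ lam := div_nonneg (by linarith) (by linarith)
    have hlam1 : lam < 1 := (div_lt_one (by linarith)).2 (by linarith)
    set a : ℕ → ℝ := fun n => dist (J (x (n+1))) (J (x n)) with ha
    have hrec : ∀ n, a (n+1) ≤ lam * a n := by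
      intro n
      have h := hc (x (n+2)) (x (n+1))
      rw [hstep (n+1), hstep n] at h
      have hd1 : dist (J (x (n+1))) (J (x (n+2))) = a (n+1) := dist_comm _ _
      have hd2 : dist (J (x n)) (J (x (n+1))) = a n := dist_comm _ _
      rw [hd1, hd2] at h
      have h' : (1 - ξ₂) * a (n+1) ≤ (ξ₁ + ξ₃) * a n := by
        have : a (n+1) ≤ ξ₁ * a n + ξ₂ * a (n+1) + ξ₃ * a n := h
        nlinarith
      rw [hlam, div_mul_eq_mul_div, le_div_iff₀ (by linarith : (0:ℝ) < 1 - ξ₂)]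
      nlinarith
    have hbound : ∀ n, a n ≤ lam ^ n * a 0 := by
      intro n
      induction n with
      | zero => simp
      | succ n ih =>
        calc a (n+1) ≤ lam * a n := hrec n
          _ ≤ lam * (lam ^ n * a 0) := by
              exact mul_le_mul_of_nonneg_left ih hlam0
          _ = lam ^ (n+1) * a 0 := by ring
    have ha0 : (0:ℝ) < a 0 + 1 := by positivity
    obtain ⟨n, hn⟩ := exists_pow_lt_of_lt_one (div_pos hε ha0) hlam1
    have han : a n < ε := by
      have h1 : a n ≤ lam ^ n * a 0 := hbound n
      have h2 : lam ^ n * (a 0 + 1) < ε := by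
        rw [div_eq_mul_inv] at hn
        calc lam ^ n * (a 0 + 1) < (ε * (a 0 + 1)⁻¹) * (a 0 + 1) := by
              exact mul_lt_mul_of_pos_right hn ha0
          _ = ε := by field_simp
      have h3 : lam ^ n * a 0 ≤ lam ^ n * (a 0 + 1) := by
        apply mul_le_mul_of_nonneg_left (by linarith) (pow_nonneg hlam0 n)
      linarith
    refine ⟨x (n+1), ?_⟩
    rw [hstep n]
    exact (hdisc _ _ han).symm
  obtain ⟨u, hKu⟩ := key
  -- J (J u) = K (J u)
  have hJt : J (J u) = K (J u) := by
    have h := hwc u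
    rw [hKu] at h
    simp only [dist_self] at h
    exact eq_of_dist_eq_zero (le_antisymm h dist_nonneg)
  -- J (J u) = J u
  have hfix : J (J u) = J u := by
    have h := hc (J u) u
    rw [← hJt, hKu] at h
    simp only [dist_self, mul_zero, add_zero] at h
    have : dist (J (J u)) (J u) ≤ 0 := by nlinarith [dist_nonneg (x := J (J u)) (y := J u)]
    exact eq_of_dist_eq_zero (le_antisymm this dist_nonneg)
  have hKfix : K (J u) = J u := by rw [← hJt, hfix]
  refine ⟨J u, ⟨hfix, hKfix⟩, ?_⟩
  rintro w ⟨hJw, hKw⟩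
  have h := hc w (J u)
  rw [hJw, hKw, ← hJt, hfix] at h
  simp only [dist_self, mul_zero, add_zero] at h
  have : dist w (J u) ≤ 0 := by nlinarith [dist_nonneg (x := w) (y := J u)]
  exact eq_of_dist_eq_zero (le_antisymm this dist_nonneg)
end

section
/- Let (F,Φ) be a nonempty uniformly discrete metric space, and let J, K, L, M : F → F satisfy: J(F) ⊆ M(F); K(F) ⊆ L(F); J∘L = L∘J; K∘M = M∘K; and there exists ξ with 0 < ξ < 1 such that Φ(J u, K q) ≤ ξ Φ(L u, M q) for all u, q ∈ F. Then there exists a unique point σ ∈ F with J(σ) = K(σ) = L(σ) = M(σ) = σ. -/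
/-- Four maps `J, K, L, M` on a nonempty uniformly discrete metric space with
`J(F) ⊆ M(F)`, `K(F) ⊆ L(F)`, `J` commuting with `L`, `K` commuting with `M`,
and `Φ(Ju, Kq) ≤ ξ Φ(Lu, Mq)` for some `0 < ξ < 1`, have a unique common fixed point. -/
theorem stmt11 {F : Type*} [MetricSpace F] [Nonempty F]
    (hud : ∃ ε > (0 : ℝ), ∀ x y : F, dist x y < ε → x = y)
    (J K L M : F → F)
    (hJM : Set.range J ⊆ Set.range M)
    (hKL : Set.range K ⊆ Set.range L)
    (hJL : J ∘ L = L ∘ J) (hKM : K ∘ M = M ∘ K)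
    (ξ : ℝ) (hξ0 : 0 < ξ) (hξ1 : ξ < 1)
    (hc : ∀ u q : F, dist (J u) (K q) ≤ ξ * dist (L u) (M q)) :
    ∃! σ : F, J σ = σ ∧ K σ = σ ∧ L σ = σ ∧ M σ = σ := by
  classical
  obtain ⟨ε, hε, hdisc⟩ := hud
  -- Step A: reduce to producing a coincidence point of K and M, or of J and L
  suffices h2 : (∃ q, K q = M q) ∨ (∃ r, J r = L r) by
    -- first get a coincidence point of K and M in both cases
    have hq : ∃ q, K q = M q := by
      rcases h2 with h | ⟨r, hr⟩
      · exact h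
      · obtain ⟨q, hMq⟩ := hJM ⟨r, rfl⟩
        have h := hc r q
        rw [hMq, ← hr, dist_self, mul_zero] at h
        have hKq : K q = J r := by
          have := dist_nonneg (x := J r) (y := K q)
          have : dist (J r) (K q) = 0 := le_antisymm h this
          exact (dist_eq_zero.mp this).symm
        exact ⟨q, by rw [hKq, hMq]⟩
    obtain ⟨q, hq⟩ := hq
    set p := M q with hp
    obtain ⟨r, hr⟩ := hKL ⟨q, rfl⟩
    have hLr : L r = p := by rw [hr, hq]
    have hJr : J r = p := by
      have h := hc r q
      rw [hLr, hp, dist_self, mul_zero] at h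
      have h0 : dist (J r) (K q) = 0 := le_antisymm h dist_nonneg
      rw [dist_eq_zero.mp h0, hq]
    have hJp : J p = L p := by
      calc J p = J (L r) := by rw [hLr]
        _ = L (J r) := congrFun hJL r
        _ = L p := by rw [hJr]
    have hKp : K p = M p := by
      calc K p = K (M q) := by rw [hp]
        _ = M (K q) := congrFun hKM q
        _ = M p := by rw [hq]
    have hJKp : J p = K p := by
      have h := hc p p
      rw [← hJp, ← hKp] at h
      have hd := dist_nonneg (x := J p) (y := K p)
      have : dist (J p) (K p) = 0 := by nlinarith
      exact dist_eq_zero.mp this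
    have hfix : J p = p := by
      have h := hc p q
      have hKqp : K q = p := by rw [hq]
      rw [hKqp, ← hJp, ← hp] at h
      have hd := dist_nonneg (x := J p) (y := p)
      have : dist (J p) (p) = 0 := by nlinarith
      exact dist_eq_zero.mp this
    refine ⟨p, ⟨hfix, by rw [← hJKp, hfix], by rw [← hJp, hfix], by rw [← hKp, ← hJKp, hfix]⟩, ?_⟩
    rintro σ ⟨hJσ, hKσ, hLσ, hMσ⟩
    have hMp : M p = p := by rw [← hKp, ← hJKp, hfix]
    have h := hc σ p
    rw [hJσ, hLσ, hMp, ← hJKp, hfix] at h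
    have hd := dist_nonneg (x := σ) (y := p)
    have : dist σ p = 0 := by nlinarith
    exact dist_eq_zero.mp this
  -- Step B: construct the alternating sequence
  have hM : ∀ a : F, ∃ b, M b = J a := fun a => hJM ⟨a, rfl⟩
  have hL : ∀ a : F, ∃ b, L b = K a := fun a => hKL ⟨a, rfl⟩
  let x : ℕ → F := fun n => Nat.rec (Classical.arbitrary F)
    (fun n a => if Even n then Classical.choose (hM a) else Classical.choose (hL a)) n
  have hx : ∀ n, x (n + 1)
      = if Even n then Classical.choose (hM (x n)) else Classical.choose (hL (x n)) :=
    fun n => rfl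
  let y : ℕ → F := fun n => if Even n then J (x n) else K (x n)
  have hy_even : ∀ n, Even n → y n = J (x n) := fun n h => if_pos h
  have hy_odd : ∀ n, ¬ Even n → y n = K (x n) := fun n h => if_neg h
  have hMx : ∀ n, Even n → M (x (n + 1)) = y n := by
    intro n h
    rw [hx n, if_pos h, Classical.choose_spec (hM (x n)), hy_even n h]
  have hLx : ∀ n, ¬ Even n → L (x (n + 1)) = y n := by
    intro n h
    rw [hx n, if_neg h, Classical.choose_spec (hL (x n)), hy_odd n h]
  have hstep : ∀ n, dist (y (n + 1)) (y (n + 2)) ≤ ξ * dist (y n) (y (n + 1)) := by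
    intro n
    by_cases h : Even n
    · have h1 : ¬ Even (n + 1) := by simp [Nat.even_add_one, h]
      have h2 : Even (n + 2) := by rw [Nat.even_add_one, Nat.even_add_one]; simpa using h
      have hcineq := hc (x (n + 2)) (x (n + 1))
      rw [hLx (n + 1) h1, hMx n h, dist_comm (y (n + 1)) (y n),
        ← hy_odd (n + 1) h1, ← hy_even (n + 2) h2] at hcineq
      rw [dist_comm (y (n + 1)) (y (n + 2))]
      exact hcineq
    · have h1 : Even (n + 1) := by simpa [Nat.even_add_one] using h
      have h2 : ¬ Even (n + 2) := by rw [Nat.even_add_one, Nat.even_add_one]; simpa using h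
      have hcineq := hc (x (n + 1)) (x (n + 2))
      rw [hLx n h, hMx (n + 1) h1, ← hy_even (n + 1) h1, ← hy_odd (n + 2) h2] at hcineq
      exact hcineq
  have hgeom : ∀ n, dist (y n) (y (n + 1)) ≤ ξ ^ n * dist (y 0) (y 1) := by
    intro n
    induction n with
    | zero => simp
    | succ n ih =>
      calc dist (y (n + 1)) (y (n + 2)) ≤ ξ * dist (y n) (y (n + 1)) := hstep n
        _ ≤ ξ * (ξ ^ n * dist (y 0) (y 1)) := by
            exact mul_le_mul_of_nonneg_left ih hξ0.le
        _ = ξ ^ (n + 1) * dist (y 0) (y 1) := by ring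
  have hd0 : (0 : ℝ) ≤ dist (y 0) (y 1) := dist_nonneg
  obtain ⟨N, hN⟩ := exists_pow_lt_of_lt_one
    (div_pos hε (by linarith : (0:ℝ) < dist (y 0) (y 1) + 1)) hξ1
  have hξN : (0 : ℝ) ≤ ξ ^ N := pow_nonneg hξ0.le N
  have hN' : ξ ^ N * (dist (y 0) (y 1) + 1) < ε :=
    (lt_div_iff₀ (by linarith)).mp hN
  have hlt : dist (y N) (y (N + 1)) < ε := by
    have := hgeom N
    nlinarith
  have hyN : y N = y (N + 1) := hdisc _ _ hlt
  by_cases hNe : Even N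
  · left
    refine ⟨x (N + 1), ?_⟩
    have h1 : ¬ Even (N + 1) := by simp [Nat.even_add_one, hNe]
    calc K (x (N + 1)) = y (N + 1) := (hy_odd (N + 1) h1).symm
      _ = y N := hyN.symm
      _ = M (x (N + 1)) := (hMx N hNe).symm
  · right
    refine ⟨x (N + 1), ?_⟩
    have h1 : Even (N + 1) := by simpa [Nat.even_add_one] using hNe
    calc J (x (N + 1)) = y (N + 1) := (hy_even (N + 1) h1).symm
      _ = y N := hyN.symm
      _ = L (x (N + 1)) := (hLx N hNe).symm
end

section
/- Let X ⊆ ℤⁿ with the Euclidean metric d, and let J, K, L : X → X be such that for some ξ with 0 < ξ < 1, d(J u, K q) ≤ ξ d(L u, L q) for all u, q ∈ X. Then (i) J = K; and (ii) if moreover X is c₁-connected and L is c₁-continuous, then J is a constant function. -/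
lemma eDist_self' {n : ℕ} (x : Fin n → ℤ) : eDist x x = 0 := by
  simp [eDist]

lemma one_le_eDist {n : ℕ} {x y : Fin n → ℤ} (h : x ≠ y) : 1 ≤ eDist x y := by
  obtain ⟨i, hi⟩ := Function.ne_iff.mp h
  have hterm : (1:ℝ) ≤ ((x i - y i : ℤ) : ℝ) ^ 2 := by
    have h0 : x i - y i ≠ 0 := sub_ne_zero.mpr hi
    have := Int.one_le_abs h0
    have : (1:ℤ) ≤ (x i - y i)^2 := by nlinarith [abs_nonneg (x i - y i), sq_abs (x i - y i)]
    exact_mod_cast this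
  have hsum : (1:ℝ) ≤ ∑ j, ((x j - y j : ℤ) : ℝ) ^ 2 :=
    le_trans hterm (Finset.single_le_sum (f := fun j => ((x j - y j : ℤ) : ℝ) ^ 2)
      (fun j _ => sq_nonneg _) (Finset.mem_univ i))
  calc (1:ℝ) = Real.sqrt 1 := (Real.sqrt_one).symm
    _ ≤ eDist x y := Real.sqrt_le_sqrt hsum

lemma eDist_le_one_of_cAdj {n : ℕ} {x y : Fin n → ℤ} (h : cAdj 1 x y) : eDist x y ≤ 1 := by
  obtain ⟨-, hcard, heq⟩ := h
  have hsum : ∑ j, ((x j - y j : ℤ) : ℝ) ^ 2 ≤ 1 := by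
    have : ∑ j, ((x j - y j : ℤ) : ℝ) ^ 2
        = ∑ j ∈ Finset.univ.filter (fun i => |x i - y i| = 1), ((x j - y j : ℤ) : ℝ) ^ 2 := by
      symm
      apply Finset.sum_filter_of_ne
      intro j _ hne
      by_contra habs
      exact hne (by simp [heq j habs])
    rw [this]
    calc ∑ j ∈ Finset.univ.filter (fun i => |x i - y i| = 1), ((x j - y j : ℤ) : ℝ) ^ 2
        = ∑ j ∈ Finset.univ.filter (fun i => |x i - y i| = 1), 1 := by
          apply Finset.sum_congr rfl
          intro j hj
          simp only [Finset.mem_filter] at hj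
          have : (x j - y j)^2 = 1 := by
            have := hj.2
            nlinarith [sq_abs (x j - y j), this]
          have : (((x j - y j : ℤ) : ℝ))^2 = 1 := by exact_mod_cast this
          rw [this]
      _ = (Finset.univ.filter (fun i => |x i - y i| = 1)).card := by simp
      _ ≤ 1 := by exact_mod_cast hcard
  calc eDist x y ≤ Real.sqrt 1 := Real.sqrt_le_sqrt hsum
    _ = 1 := Real.sqrt_one

/-- If `d(Ju, Kq) ≤ ξ d(Lu, Lq)` for all `u, q` and some `0 < ξ < 1`, then `J = K`;
and if moreover `X` is `c₁`-connected and `L` is `c₁`-continuous, `J` is constant. -/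
theorem stmt12 {n : ℕ} (X : Set (Fin n → ℤ)) (J K L : X → X)
    (ξ : ℝ) (hξ0 : 0 < ξ) (hξ1 : ξ < 1)
    (h : ∀ u q : X, eDist (J u).1 (K q).1 ≤ ξ * eDist (L u).1 (L q).1) :
    J = K ∧
    (cConnected 1 X → cContinuous 1 L → ∀ x y : X, J x = J y) := by
  have hJK : J = K := by
    funext u
    have := h u u
    rw [eDist_self', mul_zero] at this
    by_contra hne
    have hne' : (J u).1 ≠ (K u).1 := fun he => hne (Subtype.ext he)
    linarith [one_le_eDist hne']
  refine ⟨hJK, fun hconn hcont x y => ?_⟩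
  -- adjacent points map to equal J values
  have step : ∀ a b : X, cAdj 1 a.1 b.1 → J a = J b := by
    intro a b hab
    have hd : eDist (L a).1 (L b).1 ≤ 1 := by
      rcases hcont a b hab with he | hadj
      · rw [he, eDist_self']; norm_num
      · exact eDist_le_one_of_cAdj hadj
    have h1 : eDist (J a).1 (K b).1 ≤ ξ * 1 := le_trans (h a b) (by
      exact mul_le_mul_of_nonneg_left hd (le_of_lt hξ0))
    rw [mul_one] at h1
    by_contra hne
    have hne' : (J a).1 ≠ (J b).1 := fun he => hne (Subtype.ext he)
    rw [← hJK] at h1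
    linarith [one_le_eDist hne']
  have := hconn x y
  induction this with
  | refl => rfl
  | tail _ hab ih => exact ih.trans (step _ _ hab)
end
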